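/- If lim inf_{n→∞} λ_{n+1}/λ_n = 1, then c₀ ⊆ c₀^λ(F̂): every null sequence x satisfies F̄_n(x) → 0. Moreover this inclusion is strict, witnessed by x_n = f_{n+1}² which lies in c₀^λ(F̂) but is not a null sequence. -/

import Mathlib

open Filter Finset

noncomputable def fibR : ℕ → ℝ
  | 0 => 1
  | 1 => 1
  | (n + 2) => fibR (n + 1) + fibR n

noncomputable def Fhat (x : ℕ → ℝ) (n : ℕ) : ℝ :=
  fibR n / fibR (n + 1) * x n - fibR (n + 1) / fibR n * (if n = 0 then 0 else x (n - 1))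

noncomputable def Fbar (Λ : ℕ → ℝ) (x : ℕ → ℝ) (n : ℕ) : ℝ :=
  (1 / Λ n) * ∑ k ∈ Finset.range (n + 1),
    (Λ k - if k = 0 then 0 else Λ (k - 1)) *
      (fibR k / fibR (k + 1) * x k -
        fibR (k + 1) / fibR k * (if k = 0 then 0 else x (k - 1)))

/-!
`Fbar Λ x` is the weighted mean of `Fhat x` with the nonnegative weights
`λ_k - λ_{k-1}`, whose partial sums are `λ_n → ∞`. Since the Fibonacci ratios `f_n / f_{n+1}` and
`f_{n+1} / f_n` are bounded, `Fhat` maps null sequences to null sequences, and the Toeplitz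
argument passes this to the weighted means. For `x_n = f_{n+1}²` the two terms of `Fhat x k`
cancel for every `k ≥ 1`, so `Fbar Λ x n = λ_0 / λ_n → 0`, although `x_n ≥ 1`.
-/

lemma fibR_pos : ∀ n, 0 < fibR n
  | 0 | 1 => by norm_num [fibR]
  | n + 2 => add_pos (fibR_pos (n + 1)) (fibR_pos n)

lemma fibR_le_fibR_succ : ∀ n, fibR n ≤ fibR (n + 1)
  | 0 => by norm_num [fibR]
  | n + 1 => le_add_of_nonneg_right (fibR_pos n).le

lemma fibR_succ_le_two_mul : ∀ n, fibR (n + 1) ≤ 2 * fibR n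
  | 0 => by norm_num [fibR]
  | n + 1 => by
    change fibR (n + 1) + fibR n ≤ 2 * fibR (n + 1)
    linarith [fibR_le_fibR_succ n]

lemma one_le_fibR (n : ℕ) : 1 ≤ fibR n :=
  calc (1 : ℝ) = fibR 0 := rfl
    _ ≤ fibR n := monotone_nat_of_le_succ fibR_le_fibR_succ n.zero_le

lemma tendsto_Fhat_zero {x : ℕ → ℝ} (hx : Tendsto x atTop (nhds 0)) :
    Tendsto (Fhat x) atTop (nhds 0) := by
  rw [← tendsto_add_atTop_iff_nat 1]
  refine squeeze_zero_norm (a := fun n => |x (n + 1)| + 2 * |x n|) (fun n => ?_) ?_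
  · have hdown : fibR (n + 1) / fibR (n + 2) ≤ 1 :=
      (div_le_one (fibR_pos _)).mpr (fibR_le_fibR_succ _)
    have hup : fibR (n + 2) / fibR (n + 1) ≤ 2 :=
      (div_le_iff₀ (fibR_pos _)).mpr (fibR_succ_le_two_mul _)
    have hdown₀ : 0 ≤ fibR (n + 1) / fibR (n + 2) := div_nonneg (fibR_pos _).le (fibR_pos _).le
    have hup₀ : 0 ≤ fibR (n + 2) / fibR (n + 1) := div_nonneg (fibR_pos _).le (fibR_pos _).le
    simp only [Fhat, Nat.add_sub_cancel, add_eq_zero, one_ne_zero, and_false, if_false,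
      Real.norm_eq_abs]
    calc _ ≤ |fibR (n + 1) / fibR (n + 2) * x (n + 1)| + |fibR (n + 2) / fibR (n + 1) * x n| :=
          abs_sub _ _
      _ ≤ |x (n + 1)| + 2 * |x n| := by
        rw [abs_mul, abs_mul, abs_of_nonneg hdown₀, abs_of_nonneg hup₀]
        gcongr
        exact mul_le_of_le_one_left (abs_nonneg _) hdown
  · simpa using ((tendsto_add_atTop_iff_nat 1).mpr hx).abs.add (hx.abs.const_mul 2)

lemma Fhat_fibR_succ_sq (k : ℕ) :
    Fhat (fun n => fibR (n + 1) ^ 2) k = if k = 0 then 1 else 0 := by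
  rcases k with _ | k
  · norm_num [Fhat, fibR]
  · have := fibR_pos (k + 1)
    have := fibR_pos (k + 2)
    simp only [Fhat, add_eq_zero, one_ne_zero, and_false, if_false, Nat.add_sub_cancel]
    field_simp
    ring

/-- The weight `λ_k - λ_{k-1}`, with the convention `λ_{-1} = 0`. -/
def increment (Λ : ℕ → ℝ) (k : ℕ) : ℝ := Λ k - if k = 0 then 0 else Λ (k - 1)

lemma increment_nonneg {Λ : ℕ → ℝ} (hmono : Monotone Λ) (h0 : 0 ≤ Λ 0) (k : ℕ) :
    0 ≤ increment Λ k := by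
  rcases k with _ | k
  · simpa [increment] using h0
  · simpa [increment] using hmono k.le_succ

lemma sum_range_succ_increment (Λ : ℕ → ℝ) (n : ℕ) :
    ∑ k ∈ range (n + 1), increment Λ k = Λ n := by
  induction n with
  | zero => simp [increment]
  | succ n ih => rw [sum_range_succ, ih]; simp [increment]

lemma Fbar_eq_div (Λ x : ℕ → ℝ) (n : ℕ) :
    Fbar Λ x n = (∑ k ∈ range (n + 1), increment Λ k * Fhat x k) / Λ n := by
  rw [div_eq_inv_mul, ← one_div]
  rfl

lemma tendsto_weighted_mean_zero {w a : ℕ → ℝ} (hw : 0 ≤ w)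
    (hW : Tendsto (fun n => ∑ i ∈ range n, w i) atTop atTop) (ha : Tendsto a atTop (nhds 0)) :
    Tendsto (fun n => (∑ i ∈ range n, w i * a i) / ∑ i ∈ range n, w i) atTop (nhds 0) := by
  have hwa : (fun i => w i * a i) =o[atTop] w := by
    simpa using (Asymptotics.isBigO_refl w atTop).mul_isLittleO
      ((Asymptotics.isLittleO_one_iff ℝ).mpr ha)
  exact (hwa.sum_range hw hW).tendsto_div_nhds_zero

lemma tendsto_Fbar_zero {Λ x : ℕ → ℝ} (hmono : Monotone Λ) (h0 : 0 ≤ Λ 0)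
    (hlim : Tendsto Λ atTop atTop) (hx : Tendsto (Fhat x) atTop (nhds 0)) :
    Tendsto (Fbar Λ x) atTop (nhds 0) := by
  have hW : Tendsto (fun n => ∑ k ∈ range n, increment Λ k) atTop atTop := by
    rw [← tendsto_add_atTop_iff_nat 1]
    simpa only [sum_range_succ_increment] using hlim
  have := (tendsto_add_atTop_iff_nat 1).mpr
    (tendsto_weighted_mean_zero (increment_nonneg hmono h0) hW hx)
  simpa only [sum_range_succ_increment, ← Fbar_eq_div] using this

lemma Fbar_fibR_succ_sq (Λ : ℕ → ℝ) :
    Fbar Λ (fun n => fibR (n + 1) ^ 2) = fun n => Λ 0 / Λ n := by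
  ext n
  simp [Fbar_eq_div, Fhat_fibR_succ_sq, increment]

theorem c0_strict_subset_c0lambdaF_general (Λ : ℕ → ℝ) (hmono : StrictMono Λ) (hpos : ∀ k, 0 < Λ k)
    (hlim : Tendsto Λ atTop atTop) :
    (∀ x : ℕ → ℝ, Tendsto x atTop (nhds 0) → Tendsto (Fbar Λ x) atTop (nhds 0)) ∧
    (∀ x : ℕ → ℝ, (∀ n, x n = fibR (n + 1) ^ 2) →
      Tendsto (Fbar Λ x) atTop (nhds 0) ∧ ¬ Tendsto x atTop (nhds 0)) := by
  refine ⟨fun x hx => tendsto_Fbar_zero hmono.monotone (hpos 0).le hlim (tendsto_Fhat_zero hx),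
    fun x hx => ?_⟩
  obtain rfl : x = fun n => fibR (n + 1) ^ 2 := funext hx
  refine ⟨?_, fun hzero => ?_⟩
  · rw [Fbar_fibR_succ_sq]
    exact tendsto_const_nhds.div_atTop hlim
  · have : (1 : ℝ) ≤ 0 := ge_of_tendsto' hzero fun n => one_le_pow₀ (one_le_fibR (n + 1))
    norm_num at this

theorem c0_strict_subset_c0lambdaF (Λ : ℕ → ℝ) (hmono : StrictMono Λ) (hpos : ∀ k, 0 < Λ k)
    (hlim : Tendsto Λ atTop atTop)
    (hliminf : Filter.liminf (fun n => Λ (n + 1) / Λ n) atTop = 1) :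
    (∀ x : ℕ → ℝ, Tendsto x atTop (nhds 0) → Tendsto (Fbar Λ x) atTop (nhds 0)) ∧
    (∀ x : ℕ → ℝ, (∀ n, x n = fibR (n + 1) ^ 2) →
      Tendsto (Fbar Λ x) atTop (nhds 0) ∧ ¬ Tendsto x atTop (nhds 0)) :=
  c0_strict_subset_c0lambdaF_general Λ hmono hpos hlim
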